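/- arXiv:2408.13599 — 2 statements merged into one kernel-verified Lean document; each statement's English description precedes it below -/
import Mathlib

section
/- Let p > 1, k a positive integer, N = kp, R > 0, θ > −1, and set μ₀ = (θ+1)·((k−1)!)^{p/(p−1)}. For every 0 ≤ μ < μ₀ there exists a constant M such that for all k-times continuously differentiable v : (0, R] → ℝ satisfying Σ_{j=0}^{k} ∫₀^R |v^{(j)}(t)|^p sinh^{N−1}(t) dt ≤ 1, one has ∫₀^R exp( μ·|v(t)|^{p/(p−1)} )·sinh^{θ}(t) dt ≤ M. -/
open Set MeasureTheory Real

lemma aux_sinh_le {t : ℝ} (h0 : 0 ≤ t) : Real.sinh t ≤ t * Real.exp (2*t) := by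
  have h1 := Real.add_one_le_exp (-(2*t))
  have h2 : Real.exp (-(2*t)) * Real.exp (2*t) = 1 := by
    rw [← Real.exp_add]; simp
  have h3 : Real.exp (2*t) = Real.exp t * Real.exp t := by rw [← Real.exp_add]; ring_nf
  have h4 : Real.exp (-t) * Real.exp t = 1 := by rw [← Real.exp_add]; simp
  have h5 : 1 ≤ Real.exp t := Real.one_le_exp h0
  have hb2 : Real.exp (-t) * Real.exp (-t) = Real.exp (-(2*t)) := by
    rw [← Real.exp_add]; ring_nf
  have e1 : Real.exp t * (Real.exp (-t) * Real.exp (-t)) = Real.exp (-t) := by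
    rw [← mul_assoc, mul_comm (Real.exp t), h4, one_mul]
  have e2 : 1 - 2*t ≤ Real.exp (-t) * Real.exp (-t) := by rw [hb2]; linarith
  have e3 : Real.exp t - Real.exp (-t) ≤ 2*t*Real.exp t := by
    nlinarith [Real.exp_pos t]
  have e4 : Real.exp t ≤ Real.exp t * Real.exp t := by nlinarith
  have e5 : 2*t*Real.exp t ≤ 2*t*(Real.exp t * Real.exp t) := by nlinarith
  rw [Real.sinh_eq, h3]
  linarith

lemma aux_elem {q C E γ δ μ : ℝ} (hq : 0 < q) (hC : 0 ≤ C) (hE : 0 < E) (hμ : 0 ≤ μ)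
    (hγ : μ * E ^ q ≤ γ) (hγ0 : 0 ≤ γ) (hδ : 0 < δ) :
    ∃ C', 0 ≤ C' ∧ ∀ L, 0 ≤ L → μ * (C + E * L ^ (1/q)) ^ q ≤ (γ + δ) * L + C' := by
  rcases eq_or_lt_of_le hμ with h0 | hμpos
  · refine ⟨0, le_refl 0, fun L hL => ?_⟩
    rw [← h0]
    have : (0:ℝ) ≤ (γ + δ) * L := mul_nonneg (by linarith) hL
    simpa using this
  · set η : ℝ := ((γ + δ)/μ) ^ (1/q) - E with hηdef
    have hEq : E ^ q < (γ + δ)/μ := by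
      rw [lt_div_iff₀ hμpos]
      calc E ^ q * μ = μ * E ^ q := mul_comm _ _
        _ ≤ γ := hγ
        _ < γ + δ := by linarith
    have hη : 0 < η := by
      have h1 : E = (E ^ q) ^ (1/q) := by
        rw [← Real.rpow_mul hE.le, mul_one_div, div_self hq.ne', Real.rpow_one]
      have h2 : (E ^ q) ^ (1/q) < ((γ + δ)/μ) ^ (1/q) :=
        Real.rpow_lt_rpow (Real.rpow_nonneg hE.le _) hEq (by positivity)
      rw [hηdef]; rw [h1] at *; linarith [h2]
    set L₀ : ℝ := (C/η) ^ q with hL₀def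
    refine ⟨μ * (C + E * L₀ ^ (1/q)) ^ q, by positivity, fun L hL => ?_⟩
    rcases le_total L L₀ with hc | hc
    · have hmono : (C + E * L ^ (1/q)) ^ q ≤ (C + E * L₀ ^ (1/q)) ^ q := by
        apply Real.rpow_le_rpow (by positivity)
        · have : L ^ (1/q) ≤ L₀ ^ (1/q) := Real.rpow_le_rpow hL hc (by positivity)
          nlinarith
        · exact hq.le
      have h2 : μ * (C + E * L ^ (1/q)) ^ q ≤ μ * (C + E * L₀ ^ (1/q)) ^ q :=
        mul_le_mul_of_nonneg_left hmono hμ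
      have h3 : (0:ℝ) ≤ (γ + δ) * L := mul_nonneg (by linarith) hL
      linarith
    · have hL0v : L₀ ^ (1/q) = C/η := by
        rw [hL₀def, ← Real.rpow_mul (by positivity), mul_one_div, div_self hq.ne', Real.rpow_one]
      have hCle : C ≤ η * L ^ (1/q) := by
        have : L₀ ^ (1/q) ≤ L ^ (1/q) := Real.rpow_le_rpow (by positivity) hc (by positivity)
        rw [hL0v] at this
        calc C = η * (C/η) := by field_simp
          _ ≤ η * L ^ (1/q) := mul_le_mul_of_nonneg_left this hη.le
      have hmain : (C + E * L ^ (1/q)) ^ q ≤ (γ + δ)/μ * L := by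
        have h1 : C + E * L ^ (1/q) ≤ ((γ + δ)/μ) ^ (1/q) * L ^ (1/q) := by
          have : (η + E) = ((γ + δ)/μ) ^ (1/q) := by rw [hηdef]; ring
          nlinarith [Real.rpow_nonneg hL (1/q)]
        calc (C + E * L ^ (1/q)) ^ q ≤ (((γ + δ)/μ) ^ (1/q) * L ^ (1/q)) ^ q := by
              apply Real.rpow_le_rpow (by positivity) h1 hq.le
          _ = (γ + δ)/μ * L := by
              rw [Real.mul_rpow (by positivity) (by positivity),
                ← Real.rpow_mul (by positivity), ← Real.rpow_mul hL, one_div,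
                inv_mul_cancel₀ hq.ne', Real.rpow_one, Real.rpow_one]
      have h2 : μ * (C + E * L ^ (1/q)) ^ q ≤ μ * ((γ + δ)/μ * L) :=
        mul_le_mul_of_nonneg_left hmain hμ
      have h3 : μ * ((γ + δ)/μ * L) = (γ + δ) * L := by field_simp
      have h4 : (0:ℝ) ≤ μ * (C + E * L₀ ^ (1/q)) ^ q := by positivity
      linarith

set_option maxHeartbeats 2000000 in
theorem stmt16 (k : ℕ) (p R θ μ : ℝ) (hk : 0 < k) (hp : 1 < p) (hR : 0 < R)
    (N : ℕ) (hN : (N : ℝ) = k * p) (hθ : -1 < θ) (hμ0 : 0 ≤ μ)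
    (hμ : μ < (θ + 1) * (Nat.factorial (k - 1) : ℝ) ^ (p / (p - 1))) :
    ∃ M : ℝ, ∀ v : ℝ → ℝ, ContDiffOn ℝ k v (Set.Ioc 0 R) →
      (∀ j : ℕ, j ≤ k →
        IntegrableOn
          (fun t => |iteratedDerivWithin j v (Set.Ioc 0 R) t| ^ p * Real.sinh t ^ (N - 1))
          (Set.Ioo 0 R)) →
      (∑ j ∈ Finset.range (k + 1),
        ∫ t in Set.Ioo (0:ℝ) R,
          |iteratedDerivWithin j v (Set.Ioc 0 R) t| ^ p * Real.sinh t ^ (N - 1)) ≤ 1 →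
      (∫ t in Set.Ioo (0:ℝ) R,
        Real.exp (μ * |v t| ^ (p / (p - 1))) * Real.sinh t ^ θ) ≤ M := by
  have hp0 : 0 < p := lt_trans one_pos hp
  have hp1 : 0 < p - 1 := by linarith
  have hpq : p.HolderConjugate (p/(p-1)) := (Real.holderConjugate_iff_eq_conjExponent hp).2 rfl
  set q : ℝ := p / (p-1) with hqdef
  have hq1 : 1 < q := hpq.symm.lt
  have hq0 : 0 < q := lt_trans one_pos hq1
  have hkR : (1:ℝ) ≤ (k:ℝ) := by exact_mod_cast hk
  have hN1 : 1 < (N:ℝ) := by rw [hN]; nlinarith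
  have hNk : 1 ≤ N := (Nat.one_lt_cast.mp hN1).le
  have hNc : ((N - 1 : ℕ) : ℝ) = (N:ℝ) - 1 := by
    rw [Nat.cast_sub hNk]; norm_num
  set s : Set ℝ := Set.Ioc 0 R with hsdef
  have hus : UniqueDiffOn ℝ s := uniqueDiffOn_Ioc 0 R
  have hRh : 0 < R/2 := by linarith
  have hshpos : 0 < Real.sinh (R/2) ^ (N-1) := pow_pos (Real.sinh_pos_iff.mpr hRh) _
  set sh : ℝ := Real.sinh (R/2) ^ (N-1) with hshdef
  set B : ℝ := ((4/R) / sh) ^ (1/p) with hBdef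
  have hB0 : 0 ≤ B := Real.rpow_nonneg (by positivity) _
  set S : ℝ := ∑ i ∈ Finset.range k, R^i / (i.factorial : ℝ) with hSdef
  have hS0 : 0 ≤ S := Finset.sum_nonneg (fun i _ => by positivity)
  set c₂ : ℝ := R/2 + sh⁻¹ with hc₂def
  have hc₂0 : 0 ≤ c₂ := by positivity
  set E : ℝ := (((k-1).factorial : ℕ) : ℝ)⁻¹ with hEdef
  have hE : 0 < E := by positivity
  set C : ℝ := B * S + E * R^(k-1) * c₂ with hCdef
  have hC0 : 0 ≤ C := by positivity
  set γ : ℝ := μ * E ^ q with hγdef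
  have hγ0 : 0 ≤ γ := mul_nonneg hμ0 (Real.rpow_nonneg hE.le _)
  have hγlt : γ < θ + 1 := by
    have hfq : (0:ℝ) < ((Nat.factorial (k-1) : ℕ) : ℝ) ^ q :=
      Real.rpow_pos_of_pos (by positivity) _
    have hEq : E ^ q = (((Nat.factorial (k-1) : ℕ) : ℝ) ^ q)⁻¹ :=
      Real.inv_rpow (by positivity) q
    have hgd : γ = μ / ((Nat.factorial (k-1) : ℝ) ^ q) := by
      rw [hγdef, hEq, div_eq_mul_inv]
    rw [hgd, div_lt_iff₀ hfq]
    exact hμ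
  set δ : ℝ := (θ + 1 - γ)/2 with hδdef
  have hδ : 0 < δ := by rw [hδdef]; linarith
  have hγδ : γ + δ < θ + 1 := by rw [hδdef]; linarith
  obtain ⟨C', hC'0, hC'⟩ := aux_elem hq0 hC0 hE hμ0 (le_of_eq hγdef.symm) hγ0 hδ
  set m : ℝ := max (Real.exp (2*R*θ)) 1 with hmdef
  have hm1 : 1 ≤ m := le_max_right _ _
  have hm0 : 0 < m := lt_of_lt_of_le one_pos hm1
  set K : ℝ := Real.exp C' * R ^ (γ+δ) * m with hKdef
  have hK0 : 0 ≤ K := by positivity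
  have hsinhθ : ∀ t ∈ Set.Ioo (0:ℝ) R, Real.sinh t ^ θ ≤ m * t ^ θ := by
    intro t ht
    rcases le_or_gt 0 θ with h | h
    · have h1 : Real.sinh t ≤ t * Real.exp (2*R) := by
        refine le_trans (aux_sinh_le ht.1.le) ?_
        have h2 : Real.exp (2*t) ≤ Real.exp (2*R) := Real.exp_le_exp.mpr (by linarith [ht.2])
        exact mul_le_mul_of_nonneg_left h2 ht.1.le
      have h2 : Real.sinh t ^ θ ≤ (t * Real.exp (2*R)) ^ θ :=
        Real.rpow_le_rpow (Real.sinh_nonneg_iff.mpr ht.1.le) h1 h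
      have h3 : (t * Real.exp (2*R)) ^ θ = Real.exp (2*R*θ) * t ^ θ := by
        rw [Real.mul_rpow ht.1.le (Real.exp_pos _).le, ← Real.exp_mul]; ring
      refine h2.trans ?_
      rw [h3]
      exact mul_le_mul_of_nonneg_right (le_max_left _ _) (Real.rpow_nonneg ht.1.le θ)
    · have h1 : Real.sinh t ^ θ ≤ t ^ θ :=
        Real.rpow_le_rpow_of_nonpos ht.1 (Real.self_le_sinh_iff.mpr ht.1.le) h.le
      refine h1.trans ?_
      exact le_mul_of_one_le_left (Real.rpow_nonneg ht.1.le θ) hm1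
  have hgint : IntegrableOn (fun t => K * t ^ (θ - (γ+δ))) (Set.Ioo (0:ℝ) R) := by
    have := (intervalIntegral.integrableOn_Ioo_rpow_iff hR).mpr
      (show -1 < θ - (γ+δ) by linarith)
    exact this.const_mul K
  refine ⟨∫ t in Set.Ioo (0:ℝ) R, K * t ^ (θ - (γ+δ)), fun v hv hint hsum => ?_⟩
  -- each integral ≤ 1
  have hintnn : ∀ j : ℕ, ∀ x ∈ Set.Ioo (0:ℝ) R,
      0 ≤ |iteratedDerivWithin j v s x| ^ p * Real.sinh x ^ (N - 1) := by
    intro j x hx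
    exact mul_nonneg (Real.rpow_nonneg (abs_nonneg _) _)
      (pow_nonneg (Real.sinh_nonneg_iff.mpr hx.1.le) _)
  have heach : ∀ j : ℕ, j ≤ k →
      (∫ t in Set.Ioo (0:ℝ) R,
        |iteratedDerivWithin j v s t| ^ p * Real.sinh t ^ (N - 1)) ≤ 1 := by
    intro j hj
    refine le_trans ?_ hsum
    refine Finset.single_le_sum (f := fun i => ∫ t in Set.Ioo (0:ℝ) R,
      |iteratedDerivWithin i v s t| ^ p * Real.sinh t ^ (N - 1)) ?_
      (Finset.mem_range.mpr (Nat.lt_succ_of_le hj))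
    intro i _
    exact setIntegral_nonneg measurableSet_Ioo (fun x hx => hintnn i x hx)
  have hwcont : ∀ j : ℕ, j ≤ k → ContinuousOn (iteratedDerivWithin j v s) s := by
    intro j hj
    exact hv.continuousOn_iteratedDerivWithin (by exact_mod_cast hj) hus
  -- choose τ
  have hsub : Set.Ioo (R/2) R ⊆ Set.Ioo (0:ℝ) R := Set.Ioo_subset_Ioo (by linarith) le_rfl
  obtain ⟨τ, hτmem, hτB⟩ : ∃ τ ∈ Set.Ioo (R/2) R, ∀ j : ℕ, j ≤ k →
      |iteratedDerivWithin j v s τ| ≤ B := by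
    by_contra hcon
    push_neg at hcon
    have hlow : ∀ x ∈ Set.Ioo (R/2) R, 4/R ≤ ∑ j ∈ Finset.range (k+1),
        |iteratedDerivWithin j v s x| ^ p * Real.sinh x ^ (N-1) := by
      intro x hx
      obtain ⟨j, hj, hBlt⟩ := hcon x hx
      have hxI : x ∈ Set.Ioo (0:ℝ) R := hsub hx
      have h1 : B ^ p < |iteratedDerivWithin j v s x| ^ p :=
        Real.rpow_lt_rpow hB0 hBlt hp0
      have h2 : B ^ p = (4/R)/sh := by
        rw [hBdef, ← Real.rpow_mul (by positivity), one_div, inv_mul_cancel₀ hp0.ne',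
          Real.rpow_one]
      have hpow : (4/R)/sh ≤ |iteratedDerivWithin j v s x| ^ p := by
        rw [← h2]; exact h1.le
      have hsh_le : sh ≤ Real.sinh x ^ (N-1) :=
        pow_le_pow_left₀ (Real.sinh_nonneg_iff.mpr hRh.le)
          ((Real.sinh_le_sinh).mpr hx.1.le) _
      have hterm : 4/R ≤ |iteratedDerivWithin j v s x| ^ p * Real.sinh x ^ (N-1) := by
        calc 4/R = (4/R)/sh * sh := by field_simp
          _ ≤ |iteratedDerivWithin j v s x| ^ p * Real.sinh x ^ (N-1) :=
            mul_le_mul hpow hsh_le hshpos.le (Real.rpow_nonneg (abs_nonneg _) _)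
      refine hterm.trans ?_
      exact Finset.single_le_sum
        (f := fun i => |iteratedDerivWithin i v s x| ^ p * Real.sinh x ^ (N-1))
        (fun i _ => hintnn i x hxI) (Finset.mem_range.mpr (Nat.lt_succ_of_le hj))
    have hFint : IntegrableOn (fun x => ∑ j ∈ Finset.range (k+1),
        |iteratedDerivWithin j v s x| ^ p * Real.sinh x ^ (N-1)) (Set.Ioo (R/2) R) :=
      integrable_finset_sum _ (fun j hj =>
        ((hint j (Nat.lt_succ_iff.mp (Finset.mem_range.mp hj))).mono_set hsub))
    have hge := setIntegral_ge_of_const_le measurableSet_Ioo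
      (measure_Ioo_lt_top).ne hlow hFint
    have hvol : volume.real (Set.Ioo (R/2) R) = R/2 := by
      rw [measureReal_def, Real.volume_Ioo, ENNReal.toReal_ofReal (by linarith)]; ring
    have hsumle : (∫ x in Set.Ioo (R/2) R, ∑ j ∈ Finset.range (k+1),
        |iteratedDerivWithin j v s x| ^ p * Real.sinh x ^ (N-1)) ≤ 1 := by
      rw [integral_finset_sum _ (fun j hj =>
        ((hint j (Nat.lt_succ_iff.mp (Finset.mem_range.mp hj))).mono_set hsub))]
      refine le_trans (Finset.sum_le_sum (fun j hj => ?_)) hsum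
      exact setIntegral_mono_set (hint j (Nat.lt_succ_iff.mp (Finset.mem_range.mp hj)))
        ((ae_restrict_mem measurableSet_Ioo).mono (fun x hx => hintnn j x hx))
        (HasSubset.Subset.eventuallyLE hsub)
    rw [hvol, smul_eq_mul, mul_comm] at hge
    have h42 : (4/R) * (R/2) = 2 := by field_simp; ring
    rw [h42] at hge
    linarith
  have hτs : τ ∈ s := ⟨lt_trans hRh hτmem.1, hτmem.2.le⟩
  -- Taylor with integral remainder
  have hcv : ContDiffOn ℝ ((k-1 : ℕ) : ℕ∞) v s := hv.of_le (by exact_mod_cast Nat.sub_le k 1)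
  have hdiffk : DifferentiableOn ℝ (iteratedDerivWithin (k-1) v s) s :=
    hv.differentiableOn_iteratedDerivWithin (by exact_mod_cast Nat.sub_lt hk one_pos) hus
  have htaylor : ∀ x ∈ s, v x = taylorWithinEval v (k-1) s τ x +
      ∫ y in τ..x, ((((k-1).factorial : ℕ) : ℝ)⁻¹ * (x - y)^(k-1)) *
        iteratedDerivWithin k v s y := by
    have key : ∀ x : ℝ, ∀ a b : ℝ, 0 < a → a ≤ b → b ≤ R →
        taylorWithinEval v (k-1) s b x - taylorWithinEval v (k-1) s a x =
        ∫ y in a..b, ((((k-1).factorial : ℕ) : ℝ)⁻¹ * (x - y)^(k-1)) *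
          iteratedDerivWithin k v s y := by
      intro x a b ha hab hbR
      have hIccs : Icc a b ⊆ s := fun y hy => ⟨lt_of_lt_of_le ha hy.1, le_trans hy.2 hbR⟩
      have hcont : ContinuousOn (fun y => taylorWithinEval v (k-1) s y x) (Icc a b) :=
        (continuousOn_taylorWithinEval hus hcv).mono hIccs
      have hderiv : ∀ y ∈ Ioo a b, HasDerivWithinAt (fun y => taylorWithinEval v (k-1) s y x)
          (((((k-1).factorial : ℕ) : ℝ)⁻¹ * (x - y)^(k-1)) * iteratedDerivWithin k v s y)
          (Ioi y) y := by
        intro y hy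
        have hy' : y ∈ s := hIccs (Ioo_subset_Icc_self hy)
        have hd := hasDerivWithinAt_taylorWithinEval (f := v) (x := x) (n := k-1) (s := s)
          (s' := Ioo a b) hus
          (nhdsWithin_le_nhds (isOpen_Ioo.mem_nhds hy)) hy
          (fun z hz => hIccs (Ioo_subset_Icc_self hz)) hcv (hdiffk y hy')
        have hd2 := hd.hasDerivAt (isOpen_Ioo.mem_nhds hy)
        rw [Nat.sub_add_cancel hk] at hd2
        have : ((((k-1).factorial : ℕ) : ℝ)⁻¹ * (x - y)^(k-1)) *
            iteratedDerivWithin k v s y =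
            ((((k-1).factorial : ℕ) : ℝ)⁻¹ * (x - y)^(k-1)) •
            iteratedDerivWithin k v s y := by rw [smul_eq_mul]
        rw [this]
        exact hd2.hasDerivWithinAt
      have hintg : IntervalIntegrable (fun y => ((((k-1).factorial : ℕ) : ℝ)⁻¹ *
          (x - y)^(k-1)) * iteratedDerivWithin k v s y) volume a b := by
        apply ContinuousOn.intervalIntegrable
        have hco : ContinuousOn (fun y => ((((k-1).factorial : ℕ) : ℝ)⁻¹ * (x - y)^(k-1)) *
            iteratedDerivWithin k v s y) (Icc a b) :=
          (continuousOn_const.mul ((continuousOn_const.sub continuousOn_id).pow _)).mul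
            ((hwcont k le_rfl).mono hIccs)
        rwa [uIcc_of_le hab]
      exact (intervalIntegral.integral_eq_sub_of_hasDeriv_right_of_le hab hcont hderiv
        hintg).symm
    intro x hx
    rcases le_total τ x with hc | hc
    · have h1 := key x τ x (lt_trans hRh hτmem.1) hc hx.2
      rw [taylorWithinEval_self] at h1
      linarith [h1]
    · have h1 := key x x τ hx.1 hc hτmem.2.le
      rw [taylorWithinEval_self] at h1
      rw [intervalIntegral.integral_symm]
      linarith [h1]
  -- Taylor polynomial bound
  have hT : ∀ x ∈ s, |taylorWithinEval v (k-1) s τ x| ≤ B * S := by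
    intro x hx
    rw [taylor_within_apply, Nat.sub_add_cancel hk]
    refine le_trans (Finset.abs_sum_le_sum_abs _ _) ?_
    have hbound : ∀ i ∈ Finset.range k,
        |((i.factorial : ℝ)⁻¹ * (x - τ) ^ i) • iteratedDerivWithin i v s τ|
          ≤ B * (R ^ i / (i.factorial : ℝ)) := by
      intro i hi
      have hxτ : |x - τ| ≤ R := by
        rw [abs_le]
        constructor
        · have := hx.1; have := hτmem.2; linarith
        · have := hx.2; have := hτmem.1; linarith
      have hpow : |x - τ| ^ i ≤ R ^ i := pow_le_pow_left₀ (abs_nonneg _) hxτ i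
      have hwB : |iteratedDerivWithin i v s τ| ≤ B :=
        hτB i (Nat.le_of_lt (Finset.mem_range.mp hi))
      rw [smul_eq_mul, abs_mul, abs_mul, abs_pow,
        abs_of_nonneg (show (0:ℝ) ≤ (i.factorial : ℝ)⁻¹ by positivity)]
      calc (i.factorial : ℝ)⁻¹ * |x - τ| ^ i * |iteratedDerivWithin i v s τ|
          ≤ (i.factorial : ℝ)⁻¹ * R ^ i * B := by
            refine mul_le_mul (mul_le_mul_of_nonneg_left hpow (by positivity)) hwB
              (abs_nonneg _) (by positivity)
        _ = B * (R ^ i / (i.factorial : ℝ)) := by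
            rw [div_eq_mul_inv]; ring
    refine le_trans (Finset.sum_le_sum hbound) ?_
    rw [← Finset.mul_sum]
  have hwkcont : ContinuousOn (iteratedDerivWithin k v s) s := hwcont k le_rfl
  have hIwk : ∀ t ∈ Set.Ioo (0:ℝ) R,
      IntegrableOn (fun y => (y - t)^(k-1) * |iteratedDerivWithin k v s y|)
        (Set.Ioo t R) := by
    intro t ht
    have hIcc : Icc t R ⊆ s := fun y hy => ⟨lt_of_lt_of_le ht.1 hy.1, hy.2⟩
    have hc : ContinuousOn (fun y => (y-t)^(k-1) * |iteratedDerivWithin k v s y|)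
        (Icc t R) :=
      ((continuousOn_id.sub continuousOn_const).pow _).mul ((hwkcont.mono hIcc).abs)
    exact hc.integrableOn_Icc.mono_set Ioo_subset_Icc_self
  -- Young / Hölder bound
  have hY : ∀ t ∈ Set.Ioo (0:ℝ) R,
      (∫ y in Set.Ioo t R, (y - t)^(k-1) * |iteratedDerivWithin k v s y|)
        ≤ (Real.log (R/t)) ^ (1/q) := by
    intro t ht
    have ht0 := ht.1
    have hL : 0 < Real.log (R/t) := Real.log_pos (by rw [lt_div_iff₀ ht0]; linarith [ht.2])
    set L := Real.log (R/t) with hLdef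
    have hPW : ∀ y ∈ Set.Ioo t R, (y - t)^(k-1) * |iteratedDerivWithin k v s y| ≤
        y⁻¹ * L ^ (-(1/p)) / q +
        L ^ (1/q) * (|iteratedDerivWithin k v s y| ^ p * Real.sinh y ^ (N-1)) / p := by
      intro y hy
      have hy0 : 0 < y := lt_trans ht0 hy.1
      have hsy : 0 < Real.sinh y := Real.sinh_pos_iff.mpr hy0
      have hyt : (0:ℝ) ≤ y - t := by linarith [hy.1]
      set β : ℝ := ((N:ℝ)-1)/p with hβdef
      have hβ0 : 0 ≤ β := div_nonneg (by linarith) hp0.le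
      set z : ℝ := L ^ (1/(p*q)) * |iteratedDerivWithin k v s y| * Real.sinh y ^ β with hzdef
      set u : ℝ := L ^ (-(1/(p*q))) * (y - t)^(k-1) * Real.sinh y ^ (-β) with hudef
      have hz0 : 0 ≤ z := mul_nonneg (mul_nonneg (Real.rpow_nonneg hL.le _) (abs_nonneg _))
        (Real.rpow_nonneg hsy.le _)
      have hu0 : 0 ≤ u := mul_nonneg (mul_nonneg (Real.rpow_nonneg hL.le _)
        (pow_nonneg hyt _)) (Real.rpow_nonneg hsy.le _)
      have hzu : z * u = (y - t)^(k-1) * |iteratedDerivWithin k v s y| := by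
        have e1 : L ^ (1/(p*q)) * L ^ (-(1/(p*q))) = 1 := by
          rw [← Real.rpow_add hL]; norm_num
        have e2 : Real.sinh y ^ β * Real.sinh y ^ (-β) = 1 := by
          rw [← Real.rpow_add hsy]; norm_num
        calc z * u = (L ^ (1/(p*q)) * L ^ (-(1/(p*q)))) *
              (Real.sinh y ^ β * Real.sinh y ^ (-β)) *
              ((y - t)^(k-1) * |iteratedDerivWithin k v s y|) := by
                rw [hzdef, hudef]; ring
          _ = (y - t)^(k-1) * |iteratedDerivWithin k v s y| := by rw [e1, e2]; ring
      have hyoung := Real.young_inequality_of_nonneg hz0 hu0 hpq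
      rw [hzu] at hyoung
      have hzp : z ^ p = L ^ (1/q) *
          (|iteratedDerivWithin k v s y| ^ p * Real.sinh y ^ (N-1)) := by
        have e1 : (L ^ (1/(p*q))) ^ p = L ^ (1/q) := by
          rw [← Real.rpow_mul hL.le]
          congr 1
          field_simp
          try ring
        have e2 : (Real.sinh y ^ β) ^ p = Real.sinh y ^ (N-1 : ℕ) := by
          rw [← Real.rpow_mul hsy.le, hβdef]
          have e3 : ((N:ℝ)-1)/p*p = ((N-1:ℕ):ℝ) := by rw [hNc]; field_simp
          rw [e3, Real.rpow_natCast]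
        rw [hzdef, Real.mul_rpow (mul_nonneg (Real.rpow_nonneg hL.le _) (abs_nonneg _))
          (Real.rpow_nonneg hsy.le _),
          Real.mul_rpow (Real.rpow_nonneg hL.le _) (abs_nonneg _), e1, e2]
        ring
      have hup : u ^ q ≤ y⁻¹ * L ^ (-(1/p)) := by
        have e1 : (L ^ (-(1/(p*q)))) ^ q = L ^ (-(1/p)) := by
          rw [← Real.rpow_mul hL.le]
          congr 1
          field_simp
          try ring
        have e2 : u ^ q = L ^ (-(1/p)) * ((y-t)^(k-1)) ^ q * (Real.sinh y ^ (-β)) ^ q := by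
          rw [hudef, Real.mul_rpow (mul_nonneg (Real.rpow_nonneg hL.le _) (pow_nonneg hyt _))
            (Real.rpow_nonneg hsy.le _),
            Real.mul_rpow (Real.rpow_nonneg hL.le _) (pow_nonneg hyt _), e1]
        have e3 : ((y-t)^(k-1) : ℝ) ^ q ≤ ((y^(k-1) : ℝ)) ^ q :=
          Real.rpow_le_rpow (pow_nonneg hyt _)
            (pow_le_pow_left₀ hyt (by linarith) _) hq0.le
        have e4 : (Real.sinh y ^ (-β)) ^ q ≤ (y ^ (-β)) ^ q := by
          refine Real.rpow_le_rpow (Real.rpow_nonneg hsy.le _) ?_ hq0.le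
          exact Real.rpow_le_rpow_of_nonpos hy0 (Real.self_le_sinh_iff.mpr hy0.le)
            (neg_nonpos.mpr hβ0)
        have e5 : ((y^(k-1) : ℝ)) ^ q * (y ^ (-β)) ^ q = y⁻¹ := by
          rw [← Real.rpow_natCast y (k-1), ← Real.rpow_mul hy0.le, ← Real.rpow_mul hy0.le,
            ← Real.rpow_add hy0]
          have e6 : ((k-1 : ℕ):ℝ) * q + (-β) * q = -1 := by
            have hkc : ((k-1 : ℕ):ℝ) = (k:ℝ) - 1 := by
              rw [Nat.cast_sub hk]; norm_num
            rw [hkc, hβdef, hN, hqdef]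
            field_simp
            ring
          rw [e6, Real.rpow_neg_one]
        calc u ^ q = L ^ (-(1/p)) * ((y-t)^(k-1)) ^ q * (Real.sinh y ^ (-β)) ^ q := e2
          _ ≤ L ^ (-(1/p)) * ((y^(k-1) : ℝ)) ^ q * (y ^ (-β)) ^ q := by
              refine mul_le_mul (mul_le_mul_of_nonneg_left e3 (Real.rpow_nonneg hL.le _)) e4
                (Real.rpow_nonneg (Real.rpow_nonneg hsy.le _) _) ?_
              exact mul_nonneg (Real.rpow_nonneg hL.le _)
                (Real.rpow_nonneg (pow_nonneg hy0.le _) _)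
          _ = L ^ (-(1/p)) * (((y^(k-1) : ℝ)) ^ q * (y ^ (-β)) ^ q) := by ring
          _ = y⁻¹ * L ^ (-(1/p)) := by rw [e5]; ring
      calc (y - t)^(k-1) * |iteratedDerivWithin k v s y| ≤ z ^ p / p + u ^ q / q := hyoung
        _ ≤ z ^ p / p + (y⁻¹ * L ^ (-(1/p))) / q := by gcongr
        _ = y⁻¹ * L ^ (-(1/p)) / q +
            L ^ (1/q) * (|iteratedDerivWithin k v s y| ^ p * Real.sinh y ^ (N-1)) / p := by
            rw [hzp]; ring
    have hIinv : IntegrableOn (fun y : ℝ => y⁻¹ * L^(-(1/p))/q) (Set.Ioo t R) := by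
      have hc : ContinuousOn (fun y : ℝ => y⁻¹ * L^(-(1/p))/q) (Icc t R) := by
        refine ContinuousOn.div_const (ContinuousOn.mul ?_ continuousOn_const) _
        exact continuousOn_id.inv₀ (fun y hy => ne_of_gt (lt_of_lt_of_le ht0 hy.1))
      exact hc.integrableOn_Icc.mono_set Ioo_subset_Icc_self
    have hIf : IntegrableOn (fun y => L^(1/q) *
        (|iteratedDerivWithin k v s y|^p * Real.sinh y^(N-1))/p) (Set.Ioo t R) := by
      have h0 : IntegrableOn (fun y => |iteratedDerivWithin k v s y|^p * Real.sinh y^(N-1))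
          (Set.Ioo t R) :=
        (hint k le_rfl).mono_set (Set.Ioo_subset_Ioo ht0.le le_rfl)
      exact (h0.const_mul _).div_const _
    have hIadd : IntegrableOn (fun y => y⁻¹ * L^(-(1/p))/q +
        L^(1/q) * (|iteratedDerivWithin k v s y|^p * Real.sinh y^(N-1))/p)
        (Set.Ioo t R) := hIinv.add hIf
    have hmono := setIntegral_mono_on (hIwk t ht) hIadd measurableSet_Ioo hPW
    have hinv : (∫ y in Set.Ioo t R, y⁻¹) = L := by
      rw [← integral_Ioc_eq_integral_Ioo, ← intervalIntegral.integral_of_le ht.2.le,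
        integral_inv_of_pos ht0 hR]
    have hfk0 : 0 ≤ ∫ y in Set.Ioo t R,
        |iteratedDerivWithin k v s y|^p * Real.sinh y^(N-1) :=
      setIntegral_nonneg measurableSet_Ioo
        (fun y hy => hintnn k y (Set.Ioo_subset_Ioo ht0.le le_rfl hy))
    have hfk1 : (∫ y in Set.Ioo t R,
        |iteratedDerivWithin k v s y|^p * Real.sinh y^(N-1)) ≤ 1 := by
      refine le_trans (setIntegral_mono_set (hint k le_rfl)
        ((ae_restrict_mem measurableSet_Ioo).mono (fun x hx => hintnn k x hx))
        (HasSubset.Subset.eventuallyLE (Set.Ioo_subset_Ioo ht0.le le_rfl)))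
        (heach k le_rfl)
    have hsplit : (∫ y in Set.Ioo t R, (y⁻¹ * L^(-(1/p))/q +
        L^(1/q) * (|iteratedDerivWithin k v s y|^p * Real.sinh y^(N-1))/p))
        = L^(-(1/p))/q * L + L^(1/q)/p * (∫ y in Set.Ioo t R,
          |iteratedDerivWithin k v s y|^p * Real.sinh y^(N-1)) := by
      rw [integral_add hIinv hIf]
      congr 1
      · have e : (fun y : ℝ => y⁻¹ * L^(-(1/p))/q) =
            fun y : ℝ => (L^(-(1/p))/q) * y⁻¹ := by funext y; ring
        rw [e, integral_const_mul, hinv]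
      · have e : (fun y : ℝ => L^(1/q) *
            (|iteratedDerivWithin k v s y|^p * Real.sinh y^(N-1))/p) =
            fun y : ℝ => (L^(1/q)/p) *
            (|iteratedDerivWithin k v s y|^p * Real.sinh y^(N-1)) := by funext y; ring
        rw [e, integral_const_mul]
    rw [hsplit] at hmono
    have e6 : L^(-(1/p))/q * L = L^(1/q)/q := by
      rw [div_mul_eq_mul_div]
      congr 1
      rw [← Real.rpow_add_one hL.ne' (-(1/p))]
      congr 1
      have := hpq.inv_add_inv_eq_one
      rw [one_div, one_div]
      linarith
    have e7 : L^(1/q)/p * (∫ y in Set.Ioo t R,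
        |iteratedDerivWithin k v s y|^p * Real.sinh y^(N-1)) ≤ L^(1/q)/p := by
      have h0 : 0 ≤ L^(1/q)/p := div_nonneg (Real.rpow_nonneg hL.le _) hp0.le
      calc L^(1/q)/p * (∫ y in Set.Ioo t R,
          |iteratedDerivWithin k v s y|^p * Real.sinh y^(N-1)) ≤ L^(1/q)/p * 1 :=
            mul_le_mul_of_nonneg_left hfk1 h0
        _ = L^(1/q)/p := mul_one _
    have e8 : L^(1/q)/q + L^(1/q)/p = L^(1/q) := by
      have hconj := hpq.inv_add_inv_eq_one
      linear_combination (L^(1/q)) * hconj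
    rw [e6] at hmono
    linarith
  -- pointwise bound
  have hpt : ∀ t ∈ Set.Ioo (0:ℝ) R, |v t| ≤ C + E * (Real.log (R/t)) ^ (1/q) := by
    intro t ht
    have hts : t ∈ s := ⟨ht.1, ht.2.le⟩
    have hL : 0 < Real.log (R/t) := Real.log_pos (by rw [lt_div_iff₀ ht.1]; linarith [ht.2])
    have hELq : 0 ≤ E * (Real.log (R/t)) ^ (1/q) :=
      mul_nonneg hE.le (Real.rpow_nonneg hL.le _)
    have hCBS : B * S ≤ C := by
      rw [hCdef]
      have : 0 ≤ E * R^(k-1) * c₂ := by positivity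
      linarith
    have hvx := htaylor t hts
    have hTb := hT t hts
    have habs : |v t| ≤ B * S + |∫ y in τ..t, ((((k-1).factorial : ℕ) : ℝ)⁻¹ *
        (t - y)^(k-1)) * iteratedDerivWithin k v s y| := by
      rw [hvx]
      exact (abs_add_le _ _).trans (add_le_add_left hTb _)
    rcases le_total t τ with hc | hc
    · -- main case : t ≤ τ
      have h2 : |∫ y in τ..t, ((((k-1).factorial : ℕ) : ℝ)⁻¹ *
          (t - y)^(k-1)) * iteratedDerivWithin k v s y| ≤
          ∫ y in Set.Ioo t τ, |((((k-1).factorial : ℕ) : ℝ)⁻¹ *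
          (t - y)^(k-1)) * iteratedDerivWithin k v s y| := by
        rw [intervalIntegral.integral_symm t τ, abs_neg, ← integral_Ioc_eq_integral_Ioo,
          ← intervalIntegral.integral_of_le hc]
        have hni := intervalIntegral.norm_integral_le_integral_norm
          (f := fun y => ((((k-1).factorial : ℕ) : ℝ)⁻¹ *
            (t - y)^(k-1)) * iteratedDerivWithin k v s y) (μ := volume) (a := t) (b := τ) hc
        simp only [Real.norm_eq_abs] at hni
        exact hni
      have h3 : ∫ y in Set.Ioo t τ, |((((k-1).factorial : ℕ) : ℝ)⁻¹ *
          (t - y)^(k-1)) * iteratedDerivWithin k v s y| =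
          ∫ y in Set.Ioo t τ, E * ((y - t)^(k-1) * |iteratedDerivWithin k v s y|) := by
        refine setIntegral_congr_fun measurableSet_Ioo (fun y hy => ?_)
        rw [abs_mul, abs_mul, abs_pow, abs_sub_comm t y,
          abs_of_nonneg (show (0:ℝ) ≤ y - t by linarith [hy.1]),
          abs_of_nonneg (show (0:ℝ) ≤ (((k-1).factorial : ℕ) : ℝ)⁻¹ by positivity)]
        rw [hEdef]; ring
      have h4 : (∫ y in Set.Ioo t τ, E * ((y - t)^(k-1) * |iteratedDerivWithin k v s y|)) ≤
          ∫ y in Set.Ioo t R, E * ((y - t)^(k-1) * |iteratedDerivWithin k v s y|) := by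
        refine setIntegral_mono_set ((hIwk t ht).const_mul E)
          ((ae_restrict_mem measurableSet_Ioo).mono (fun y hy => ?_))
          (HasSubset.Subset.eventuallyLE (Set.Ioo_subset_Ioo le_rfl hτmem.2.le))
        exact mul_nonneg hE.le (mul_nonneg (pow_nonneg (by linarith [hy.1]) _) (abs_nonneg _))
      have h5 : (∫ y in Set.Ioo t R, E * ((y - t)^(k-1) * |iteratedDerivWithin k v s y|)) =
          E * ∫ y in Set.Ioo t R, (y - t)^(k-1) * |iteratedDerivWithin k v s y| :=
        integral_const_mul E _
      have h6 : E * (∫ y in Set.Ioo t R, (y - t)^(k-1) * |iteratedDerivWithin k v s y|) ≤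
          E * (Real.log (R/t)) ^ (1/q) :=
        mul_le_mul_of_nonneg_left (hY t ht) hE.le
      calc |v t| ≤ B * S + |∫ y in τ..t, ((((k-1).factorial : ℕ) : ℝ)⁻¹ *
          (t - y)^(k-1)) * iteratedDerivWithin k v s y| := habs
        _ ≤ B * S + E * (Real.log (R/t)) ^ (1/q) := by
            rw [h3] at h2
            rw [h5] at h4
            linarith
        _ ≤ C + E * (Real.log (R/t)) ^ (1/q) := by linarith
    · -- boundary case : τ ≤ t
      have hsubτ : Set.Ioo τ t ⊆ Set.Ioo (R/2) R :=
        Set.Ioo_subset_Ioo hτmem.1.le ht.2.le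
      have hIccτ : Icc τ t ⊆ s := fun y hy =>
        ⟨lt_of_lt_of_le (lt_trans hRh hτmem.1) hy.1, le_trans hy.2 ht.2.le⟩
      have hIccs2 : Icc (R/2) R ⊆ s := fun y hy => ⟨lt_of_lt_of_le hRh hy.1, hy.2⟩
      have hIabs : IntegrableOn (fun y => |iteratedDerivWithin k v s y|)
          (Set.Ioo (R/2) R) :=
        ((hwkcont.mono hIccs2).abs.integrableOn_Icc).mono_set Ioo_subset_Icc_self
      have h2 : |∫ y in τ..t, ((((k-1).factorial : ℕ) : ℝ)⁻¹ *
          (t - y)^(k-1)) * iteratedDerivWithin k v s y| ≤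
          ∫ y in Set.Ioo τ t, |((((k-1).factorial : ℕ) : ℝ)⁻¹ *
          (t - y)^(k-1)) * iteratedDerivWithin k v s y| := by
        rw [← integral_Ioc_eq_integral_Ioo, ← intervalIntegral.integral_of_le hc]
        have hni := intervalIntegral.norm_integral_le_integral_norm
          (f := fun y => ((((k-1).factorial : ℕ) : ℝ)⁻¹ *
            (t - y)^(k-1)) * iteratedDerivWithin k v s y) (μ := volume) (a := τ) (b := t) hc
        simp only [Real.norm_eq_abs] at hni
        exact hni
      have h3 : ∀ y ∈ Set.Ioo τ t, |((((k-1).factorial : ℕ) : ℝ)⁻¹ *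
          (t - y)^(k-1)) * iteratedDerivWithin k v s y| ≤
          (E * R^(k-1)) * |iteratedDerivWithin k v s y| := by
        intro y hy
        rw [abs_mul, abs_mul, abs_pow,
          abs_of_nonneg (show (0:ℝ) ≤ (((k-1).factorial : ℕ) : ℝ)⁻¹ by positivity)]
        have htr : |t - y| ≤ R := by
          rw [abs_le]
          constructor
          · have h0 : 0 < y := lt_trans (lt_trans hRh hτmem.1) hy.1
            have h0' := hy.2
            have := ht.2
            linarith
          · have h0 : 0 < y := lt_trans (lt_trans hRh hτmem.1) hy.1
            have h0' := hy.2
            have := ht.2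
            linarith
        have hpw : |t - y| ^ (k-1) ≤ R ^ (k-1) := pow_le_pow_left₀ (abs_nonneg _) htr _
        rw [hEdef]
        exact mul_le_mul_of_nonneg_right (mul_le_mul_of_nonneg_left hpw (by positivity))
          (abs_nonneg _)
      have hIτt : IntegrableOn (fun y => |((((k-1).factorial : ℕ) : ℝ)⁻¹ *
          (t - y)^(k-1)) * iteratedDerivWithin k v s y|) (Set.Ioo τ t) := by
        have hcont : ContinuousOn (fun y => |((((k-1).factorial : ℕ) : ℝ)⁻¹ *
            (t - y)^(k-1)) * iteratedDerivWithin k v s y|) (Icc τ t) :=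
          ((continuousOn_const.mul ((continuousOn_const.sub continuousOn_id).pow _)).mul
            (hwkcont.mono hIccτ)).abs
        exact hcont.integrableOn_Icc.mono_set Ioo_subset_Icc_self
      have h4 : (∫ y in Set.Ioo τ t, |((((k-1).factorial : ℕ) : ℝ)⁻¹ *
          (t - y)^(k-1)) * iteratedDerivWithin k v s y|) ≤
          ∫ y in Set.Ioo τ t, (E * R^(k-1)) * |iteratedDerivWithin k v s y| :=
        setIntegral_mono_on hIτt ((hIabs.mono_set hsubτ).const_mul _)
          measurableSet_Ioo h3
      have h5 : (∫ y in Set.Ioo τ t, (E * R^(k-1)) * |iteratedDerivWithin k v s y|) ≤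
          ∫ y in Set.Ioo (R/2) R, (E * R^(k-1)) * |iteratedDerivWithin k v s y| := by
        refine setIntegral_mono_set (hIabs.const_mul _)
          ((ae_restrict_mem measurableSet_Ioo).mono (fun y _ => ?_))
          (HasSubset.Subset.eventuallyLE hsubτ)
        exact mul_nonneg (by positivity) (abs_nonneg _)
      -- bound the integral of |w_k| over Ioo (R/2) R
      have hpw2 : ∀ y ∈ Set.Ioo (R/2) R, |iteratedDerivWithin k v s y| ≤
          1 + sh⁻¹ * (|iteratedDerivWithin k v s y|^p * Real.sinh y^(N-1)) := by
        intro y hy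
        have hy0 : 0 < y := lt_trans hRh hy.1
        have hsh_le : sh ≤ Real.sinh y ^ (N-1) :=
          pow_le_pow_left₀ (Real.sinh_nonneg_iff.mpr hRh.le)
            ((Real.sinh_le_sinh).mpr hy.1.le) _
        have hterm : 0 ≤ sh⁻¹ * (|iteratedDerivWithin k v s y|^p * Real.sinh y^(N-1)) :=
          mul_nonneg (by positivity) (hintnn k y (hsub hy))
        rcases le_or_gt |iteratedDerivWithin k v s y| 1 with hw1 | hw1
        · linarith
        · have ha : |iteratedDerivWithin k v s y| ≤ |iteratedDerivWithin k v s y| ^ p := by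
            nth_rewrite 1 [← Real.rpow_one |iteratedDerivWithin k v s y|]
            exact Real.rpow_le_rpow_of_exponent_le hw1.le hp.le
          have hb : 1 ≤ sh⁻¹ * Real.sinh y ^ (N-1) := by
            rw [← inv_mul_cancel₀ hshpos.ne']
            exact mul_le_mul_of_nonneg_left hsh_le (by positivity)
          have hwp0 : 0 ≤ |iteratedDerivWithin k v s y| ^ p :=
            Real.rpow_nonneg (abs_nonneg _) _
          have hc2 : |iteratedDerivWithin k v s y| ^ p ≤
              sh⁻¹ * (|iteratedDerivWithin k v s y|^p * Real.sinh y^(N-1)) := by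
            calc |iteratedDerivWithin k v s y| ^ p
                = |iteratedDerivWithin k v s y| ^ p * 1 := (mul_one _).symm
              _ ≤ |iteratedDerivWithin k v s y| ^ p * (sh⁻¹ * Real.sinh y ^ (N-1)) :=
                  mul_le_mul_of_nonneg_left hb hwp0
              _ = sh⁻¹ * (|iteratedDerivWithin k v s y|^p * Real.sinh y^(N-1)) := by ring
          linarith
      have hIrhs : IntegrableOn (fun y => 1 + sh⁻¹ *
          (|iteratedDerivWithin k v s y|^p * Real.sinh y^(N-1))) (Set.Ioo (R/2) R) := by
        refine Integrable.add (integrableOn_const measure_Ioo_lt_top.ne) ?_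
        exact ((hint k le_rfl).mono_set hsub).const_mul _
      have h6 : (∫ y in Set.Ioo (R/2) R, |iteratedDerivWithin k v s y|) ≤ c₂ := by
        refine le_trans (setIntegral_mono_on hIabs hIrhs measurableSet_Ioo hpw2) ?_
        rw [integral_add (integrableOn_const (C := (1:ℝ)) (s := Set.Ioo (R/2) R) (μ := volume) measure_Ioo_lt_top.ne)
          (((hint k le_rfl).mono_set hsub).const_mul _)]
        have hv1 : (∫ _ in Set.Ioo (R/2) R, (1:ℝ)) = R/2 := by
          simp [Real.volume_Ioo]
          rw [max_eq_left (by linarith)]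
          ring
        have hv2 : (∫ y in Set.Ioo (R/2) R, sh⁻¹ *
            (|iteratedDerivWithin k v s y|^p * Real.sinh y^(N-1))) ≤ sh⁻¹ := by
          rw [integral_const_mul]
          have hle1 : (∫ y in Set.Ioo (R/2) R,
              |iteratedDerivWithin k v s y|^p * Real.sinh y^(N-1)) ≤ 1 := by
            refine le_trans (setIntegral_mono_set (hint k le_rfl)
              ((ae_restrict_mem measurableSet_Ioo).mono (fun x hx => hintnn k x hx))
              (HasSubset.Subset.eventuallyLE hsub)) (heach k le_rfl)
          calc sh⁻¹ * (∫ y in Set.Ioo (R/2) R,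
              |iteratedDerivWithin k v s y|^p * Real.sinh y^(N-1)) ≤ sh⁻¹ * 1 :=
                mul_le_mul_of_nonneg_left hle1 (by positivity)
            _ = sh⁻¹ := mul_one _
        rw [hv1, hc₂def]
        linarith
      have h7 : (∫ y in Set.Ioo (R/2) R, (E * R^(k-1)) * |iteratedDerivWithin k v s y|) ≤
          E * R^(k-1) * c₂ := by
        rw [integral_const_mul]
        exact mul_le_mul_of_nonneg_left h6 (by positivity)
      calc |v t| ≤ B * S + |∫ y in τ..t, ((((k-1).factorial : ℕ) : ℝ)⁻¹ *
          (t - y)^(k-1)) * iteratedDerivWithin k v s y| := habs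
        _ ≤ B * S + E * R^(k-1) * c₂ := by linarith
        _ = C := hCdef.symm
        _ ≤ C + E * (Real.log (R/t)) ^ (1/q) := by linarith
  -- conclusion
  have hfinal : ∀ t ∈ Set.Ioo (0:ℝ) R,
      Real.exp (μ * |v t| ^ q) * Real.sinh t ^ θ ≤ K * t ^ (θ - (γ+δ)) := by
    intro t ht
    have hL : 0 < Real.log (R/t) := Real.log_pos (by rw [lt_div_iff₀ ht.1]; linarith [ht.2])
    have hRt : 0 < R/t := div_pos hR ht.1
    have h1 : μ * |v t| ^ q ≤ (γ+δ) * Real.log (R/t) + C' := by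
      have h2 : |v t| ^ q ≤ (C + E * (Real.log (R/t)) ^ (1/q)) ^ q :=
        Real.rpow_le_rpow (abs_nonneg _) (hpt t ht) hq0.le
      have h3 := hC' (Real.log (R/t)) hL.le
      have h4 : μ * |v t| ^ q ≤ μ * (C + E * (Real.log (R/t)) ^ (1/q)) ^ q :=
        mul_le_mul_of_nonneg_left h2 hμ0
      linarith
    have h5 : Real.exp (μ * |v t| ^ q) ≤ Real.exp C' * (R/t) ^ (γ+δ) := by
      rw [Real.rpow_def_of_pos hRt, ← Real.exp_add]
      exact Real.exp_le_exp.mpr (by rw [mul_comm (Real.log (R/t)) (γ+δ)]; linarith)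
    have h6 := hsinhθ t ht
    have h7 : Real.exp (μ * |v t| ^ q) * Real.sinh t ^ θ ≤
        (Real.exp C' * (R/t) ^ (γ+δ)) * (m * t ^ θ) := by
      refine mul_le_mul h5 h6 (Real.rpow_nonneg (Real.sinh_nonneg_iff.mpr ht.1.le) _) ?_
      positivity
    refine h7.trans (le_of_eq ?_)
    rw [hKdef, Real.div_rpow hR.le ht.1.le, Real.rpow_sub ht.1]
    field_simp
  have hcont : ContinuousOn (fun t => Real.exp (μ * |v t| ^ q) * Real.sinh t ^ θ)
      (Set.Ioo (0:ℝ) R) := by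
    have c1 : ContinuousOn (fun t => |v t| ^ q) (Set.Ioo (0:ℝ) R) :=
      ((hv.continuousOn.mono Ioo_subset_Ioc_self).abs).rpow_const
        (fun t _ => Or.inr hq0.le)
    have c2 : ContinuousOn (fun t => Real.exp (μ * |v t| ^ q)) (Set.Ioo (0:ℝ) R) :=
      Real.continuous_exp.comp_continuousOn (continuousOn_const.mul c1)
    have c3 : ContinuousOn (fun t => Real.sinh t ^ θ) (Set.Ioo (0:ℝ) R) :=
      Real.continuous_sinh.continuousOn.rpow_const
        (fun t ht => Or.inl (ne_of_gt (Real.sinh_pos_iff.mpr ht.1)))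
    exact c2.mul c3
  have hhint : IntegrableOn (fun t => Real.exp (μ * |v t| ^ q) * Real.sinh t ^ θ)
      (Set.Ioo (0:ℝ) R) := by
    refine Integrable.mono' hgint (hcont.aestronglyMeasurable measurableSet_Ioo) ?_
    filter_upwards [ae_restrict_mem measurableSet_Ioo] with t ht
    rw [Real.norm_eq_abs, abs_of_nonneg (mul_nonneg (Real.exp_pos _).le
      (Real.rpow_nonneg (Real.sinh_nonneg_iff.mpr ht.1.le) _))]
    exact hfinal t ht
  exact setIntegral_mono_on hhint hgint measurableSet_Ioo hfinal
end

section
/- Let u be a smooth radial function on the Poincaré ball model of ℍ^N, u(x) = v(d(x)) with d(x) = log((1+|x|)/(1−|x|)). Then for every positive integer j and every x ≠ 0, v^{(j)}(d(x)) = ((1−|x|²)/2)^j · Σ_{i₁,…,i_j=1}^{N} (∇^j u)_{i₁⋯i_j}(x) · x_{i₁}⋯x_{i_j} / |x|^j, where ∇^j u is the j-th covariant derivative with respect to the hyperbolic metric. Consequently |v^{(j)}(d(x))| ≤ |∇^j u(x)|_g. -/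
/-- The Christoffel symbols `Γ^k_{ij}` of the Poincaré ball model of hyperbolic space. -/
noncomputable def christoffel (N : ℕ) (x : EuclideanSpace ℝ (Fin N)) (i j k : Fin N) : ℝ :=
  (2 / (1 - ‖x‖ ^ 2)) *
    (x i * (if j = k then 1 else 0) + x j * (if i = k then 1 else 0)
      - x k * (if i = j then 1 else 0))

/-- Covariant derivative (in coordinates) of a `j`-covariant tensor field on the
Poincaré ball: the new first index is the differentiation index. -/
noncomputable def covD (N : ℕ) (j : ℕ)
    (η : (Fin j → Fin N) → EuclideanSpace ℝ (Fin N) → ℝ) :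
    (Fin (j + 1) → Fin N) → EuclideanSpace ℝ (Fin N) → ℝ :=
  fun I x =>
    fderiv ℝ (η fun m => I m.succ) x (EuclideanSpace.single (I 0) 1)
      - ∑ ℓ : Fin j, ∑ α : Fin N,
          christoffel N x (I 0) (I ℓ.succ) α * η (Function.update (fun m => I m.succ) ℓ α) x

/-- Components of the `j`-th covariant derivative `∇^j u` of a function `u`. -/
noncomputable def covIter (N : ℕ) (u : EuclideanSpace ℝ (Fin N) → ℝ) :
    (j : ℕ) → (Fin j → Fin N) → EuclideanSpace ℝ (Fin N) → ℝ
  | 0 => fun _ x => u x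
  | j + 1 => covD N j (covIter N u j)

open Function Finset
open scoped ContDiff

variable {N : ℕ}
noncomputable abbrev EE (N : ℕ) := EuclideanSpace ℝ (Fin N)

def SS (N : ℕ) : Set (EE N) := {y | y ≠ 0 ∧ ‖y‖ < 1}

lemma mem_SS {y : EE N} (h1 : y ≠ 0) (h2 : ‖y‖ < 1) : y ∈ SS N := ⟨h1, h2⟩

lemma isOpen_SS : IsOpen (SS N) := by
  have : SS N = (Metric.ball (0 : EE N) 1) ∩ {(0:EE N)}ᶜ := by
    ext y; simp [SS, mem_ball_zero_iff, and_comm, sub_eq_zero]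
  rw [this]
  exact Metric.isOpen_ball.inter isOpen_compl_singleton

-- test : decomposition of x
lemma x_decomp (x : EE N) : (∑ i, x i • EuclideanSpace.single i (1:ℝ)) = x := by
  ext k
  rw [show (∑ i, x i • EuclideanSpace.single i (1:ℝ)) k
      = ∑ i, (x i • EuclideanSpace.single i (1:ℝ)) k from by simp only [WithLp.ofLp_sum, Finset.sum_apply]]
  simp [EuclideanSpace.single_apply]

lemma fderiv_contract (f : EE N → ℝ) (x : EE N) (hf : DifferentiableAt ℝ f x) :
    ∑ i, x i * fderiv ℝ f x (EuclideanSpace.single i 1) = fderiv ℝ f x x := by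
  have h : (fderiv ℝ f x) x = (fderiv ℝ f x) (∑ i, x i • EuclideanSpace.single i (1:ℝ)) := by
    rw [x_decomp]
  rw [h, map_sum]
  exact Finset.sum_congr rfl fun i _ => by rw [map_smul]; simp

lemma comp_update' (x : EE N) {j : ℕ} (K : Fin j → Fin N) (ℓ : Fin j) (q : Fin N) :
    (fun m => x (Function.update K ℓ q m)) = Function.update (fun m => x (K m)) ℓ (x q) := by
  funext m
  rcases eq_or_ne m ℓ with h | h
  · subst h; rw [Function.update_self, Function.update_self]
  · rw [Function.update_of_ne h, Function.update_of_ne h]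

def eupd {j N : ℕ} (ℓ : Fin j) : ((Fin j → Fin N) × Fin N) ≃ ((Fin j → Fin N) × Fin N) where
  toFun p := (Function.update p.1 ℓ p.2, p.1 ℓ)
  invFun p := (Function.update p.1 ℓ p.2, p.1 ℓ)
  left_inv p := by simp [Function.update_idem]
  right_inv p := by simp [Function.update_idem]

lemma norm_sq_eq (x : EE N) : ‖x‖ ^ 2 = ∑ i, x i ^ 2 := by
  rw [EuclideanSpace.norm_eq, Real.sq_sqrt (by positivity)]
  simp [sq_abs]

lemma denom_ne (x : EE N) (hx1 : ‖x‖ < 1) : 1 - ‖x‖ ^ 2 ≠ 0 := by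
  nlinarith [norm_nonneg x]

lemma christoffel_contract (x : EE N) (β : Fin N) :
    ∑ i : Fin N, ∑ q : Fin N, christoffel N x i q β * (x i * x q)
      = 2 / (1 - ‖x‖ ^ 2) * ‖x‖ ^ 2 * x β := by
  have pt : ∀ i q : Fin N, christoffel N x i q β * (x i * x q)
      = 2 / (1 - ‖x‖ ^ 2) * ((if q = β then x i * (x i * x q) else 0)
          + (if i = β then x q * (x i * x q) else 0)
          - (if i = q then x β * (x i * x q) else 0)) := by
    intro i q
    simp only [christoffel]
    split_ifs <;> ring
  simp only [pt, ← Finset.mul_sum]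
  rw [mul_assoc]
  congr 1
  simp only [Finset.sum_sub_distrib, Finset.sum_add_distrib]
  rw [Finset.sum_comm (f := fun i q => if i = β then x q * (x i * x q) else 0)]
  simp only [Finset.sum_ite_eq', Finset.sum_ite_eq, Finset.mem_univ, if_true]
  rw [norm_sq_eq]
  rw [Finset.sum_mul]
  have e2 : (∑ q : Fin N, x q * (x β * x q)) = ∑ i : Fin N, x β * (x i * x i) :=
    Finset.sum_congr rfl fun i _ => by ring
  rw [e2, add_sub_cancel_right]
  exact Finset.sum_congr rfl fun i _ => by ring

lemma Bcontract (x : EE N) {j : ℕ} (η : (Fin j → Fin N) → EE N → ℝ) (ℓ : Fin j) :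
    (∑ J : Fin j → Fin N, ∑ α : Fin N, ∑ i0 : Fin N,
      christoffel N x i0 (J ℓ) α * η (Function.update J ℓ α) x * (x i0 * ∏ m, x (J m)))
    = 2 / (1 - ‖x‖ ^ 2) * ‖x‖ ^ 2 * ∑ K : Fin j → Fin N, η K x * ∏ m, x (K m) := by
  have key : ∀ K : Fin j → Fin N, ∀ q : Fin N, ∀ i0 : Fin N,
      christoffel N x i0 ((Function.update K ℓ q) ℓ) (K ℓ)
          * η (Function.update (Function.update K ℓ q) ℓ (K ℓ)) x
          * (x i0 * ∏ m, x (Function.update K ℓ q m))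
        = christoffel N x i0 q (K ℓ) * (x i0 * x q)
            * (η K x * ∏ m ∈ univ.erase ℓ, x (K m)) := by
    intro K q i0
    rw [Function.update_self, Function.update_idem, Function.update_eq_self, comp_update' x K ℓ q,
      Finset.prod_update_of_mem (Finset.mem_univ ℓ), Finset.sdiff_singleton_eq_erase]
    ring
  have h1 : (∑ J : Fin j → Fin N, ∑ α : Fin N, ∑ i0 : Fin N,
        christoffel N x i0 (J ℓ) α * η (Function.update J ℓ α) x * (x i0 * ∏ m, x (J m)))
      = ∑ p : (Fin j → Fin N) × Fin N, ∑ i0 : Fin N,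
        christoffel N x i0 (p.1 ℓ) p.2 * η (Function.update p.1 ℓ p.2) x
          * (x i0 * ∏ m, x (p.1 m)) := by
    rw [Fintype.sum_prod_type]
  rw [h1, ← Equiv.sum_comp (eupd ℓ)]
  have h2 : ∀ p : (Fin j → Fin N) × Fin N,
      (∑ i0, christoffel N x i0 (((eupd ℓ) p).1 ℓ) ((eupd ℓ) p).2
        * η (Function.update ((eupd ℓ) p).1 ℓ ((eupd ℓ) p).2) x
        * (x i0 * ∏ m, x (((eupd ℓ) p).1 m)))
      = ∑ i0, christoffel N x i0 p.2 (p.1 ℓ) * (x i0 * x p.2)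
          * (η p.1 x * ∏ m ∈ univ.erase ℓ, x (p.1 m)) := by
    intro p
    exact Finset.sum_congr rfl fun i0 _ => key p.1 p.2 i0
  rw [Finset.sum_congr rfl fun p _ => h2 p]
  rw [Fintype.sum_prod_type]
  have h3 : ∀ K : Fin j → Fin N,
      (∑ q : Fin N, ∑ i0 : Fin N, christoffel N x i0 q (K ℓ) * (x i0 * x q)
        * (η K x * ∏ m ∈ univ.erase ℓ, x (K m)))
      = (2 / (1 - ‖x‖ ^ 2) * ‖x‖ ^ 2 * x (K ℓ))
          * (η K x * ∏ m ∈ univ.erase ℓ, x (K m)) := by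
    intro K
    rw [Finset.sum_comm]
    simp only [← Finset.sum_mul]
    rw [christoffel_contract x (K ℓ)]
  rw [Finset.sum_congr rfl fun K _ => h3 K]
  rw [Finset.mul_sum]
  refine Finset.sum_congr rfl fun K _ => ?_
  rw [← Finset.mul_prod_erase univ (fun m => x (K m)) (Finset.mem_univ ℓ)]
  ring

noncomputable def dd (r : ℝ) : ℝ := Real.log ((1 + r) / (1 - r))
noncomputable def gg (v : ℝ → ℝ) (j : ℕ) (r : ℝ) : ℝ :=
  (r * (2 / (1 - r ^ 2))) ^ j * iteratedDeriv j v (dd r)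
noncomputable def ggD (v : ℝ → ℝ) (j : ℕ) (r : ℝ) : ℝ :=
  (j : ℝ) * (r * (2 / (1 - r ^ 2))) ^ (j - 1) *
      (1 * (2 / (1 - r ^ 2)) + r * (4 * r / (1 - r ^ 2) ^ 2)) * iteratedDeriv j v (dd r)
    + (r * (2 / (1 - r ^ 2))) ^ j * (iteratedDeriv (j + 1) v (dd r) * (2 / (1 - r ^ 2)))

lemma itd_hasDeriv (v : ℝ → ℝ) (hv : ContDiff ℝ (⊤ : ℕ∞) v) (j : ℕ) (t : ℝ) :
    HasDerivAt (iteratedDeriv j v) (iteratedDeriv (j + 1) v t) t := by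
  have h : DifferentiableAt ℝ (iteratedDeriv j v) t :=
    (hv.differentiable_iteratedDeriv j (by exact_mod_cast lt_top_iff_ne_top.2 (by simp))).differentiableAt
  have := h.hasDerivAt
  rwa [show deriv (iteratedDeriv j v) t = iteratedDeriv (j + 1) v t from by
    rw [iteratedDeriv_succ]] at this

lemma dd_hasDeriv (r : ℝ) (h0 : 0 < r) (h1 : r < 1) :
    HasDerivAt dd (2 / (1 - r ^ 2)) r := by
  have hne : (1 : ℝ) - r ≠ 0 := by linarith
  have hq : HasDerivAt (fun s : ℝ => (1 + s) / (1 - s))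
      ((1 * (1 - r) - (1 + r) * (-1)) / (1 - r) ^ 2) r :=
    ((hasDerivAt_id r).const_add 1).div ((hasDerivAt_id r).const_sub 1) hne
  have harg : (1 + r) / (1 - r) ≠ 0 := by positivity
  have := hq.log harg
  convert this using 1
  · rfl
  have h2 : (1:ℝ) - r ^ 2 ≠ 0 := by nlinarith
  have h3 : (1:ℝ) + r ≠ 0 := by linarith
  field_simp
  ring

lemma c_hasDeriv (r : ℝ) (h1 : r < 1) (h0 : 0 < r) :
    HasDerivAt (fun s : ℝ => 2 / (1 - s ^ 2)) (4 * r / (1 - r ^ 2) ^ 2) r := by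
  have h2 : (1:ℝ) - r ^ 2 ≠ 0 := by nlinarith
  have hden : HasDerivAt (fun s : ℝ => 1 - s ^ 2) (-(2 * r ^ 1)) r :=
    (hasDerivAt_pow 2 r).const_sub 1
  have := (hasDerivAt_const r (2:ℝ)).div (by simpa using hden) h2
  refine this.congr_deriv ?_
  ring

lemma gg_hasDeriv (v : ℝ → ℝ) (hv : ContDiff ℝ (⊤ : ℕ∞) v) (j : ℕ) (r : ℝ)
    (h0 : 0 < r) (h1 : r < 1) : HasDerivAt (gg v j) (ggD v j r) r := by
  have hbase : HasDerivAt (fun s : ℝ => s * (2 / (1 - s ^ 2)))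
      (1 * (2 / (1 - r ^ 2)) + r * (4 * r / (1 - r ^ 2) ^ 2)) r :=
    (hasDerivAt_id r).mul (c_hasDeriv r h1 h0)
  have hpow := hbase.pow j
  have hcomp : HasDerivAt (fun s : ℝ => iteratedDeriv j v (dd s))
      (iteratedDeriv (j + 1) v (dd r) * (2 / (1 - r ^ 2))) r :=
    (itd_hasDeriv v hv j (dd r)).comp r (dd_hasDeriv r h0 h1)
  have := hpow.mul hcomp
  convert this using 1
  all_goals rfl

lemma gg_combine (v : ℝ → ℝ) (j : ℕ) (r : ℝ) (h0 : 0 < r) (h1 : r < 1) :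
    r * ggD v j r - (j : ℝ) * gg v j r - (j : ℝ) * (2 / (1 - r ^ 2)) * r ^ 2 * gg v j r
      = gg v (j + 1) r := by
  have h2 : (1:ℝ) - r ^ 2 ≠ 0 := by nlinarith
  have hr : r ≠ 0 := ne_of_gt h0
  unfold gg ggD
  have h4 : 4 * r / (1 - r ^ 2) ^ 2 = (2 / (1 - r ^ 2)) ^ 2 * r := by
    field_simp
    norm_num
  rw [h4]
  cases j with
  | zero => simp; ring
  | succ n =>
    simp only [Nat.add_sub_cancel, pow_succ, Nat.cast_succ]
    ring


lemma contDiffOn_dnorm : ContDiffOn ℝ ∞ (fun y : EE N => dd ‖y‖) (SS N) := by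
  intro y hy
  apply ContDiffAt.contDiffWithinAt
  have hn : ContDiffAt ℝ ∞ (fun y : EE N => ‖y‖) y := contDiffAt_id.norm ℝ hy.1
  have h1 : (1:ℝ) - ‖y‖ ≠ 0 := sub_ne_zero.2 (ne_of_gt hy.2)
  have harg : (1 + ‖y‖) / (1 - ‖y‖) ≠ 0 := by
    have hp : (0:ℝ) < (1 + ‖y‖) / (1 - ‖y‖) :=
      div_pos (by have := norm_nonneg y; linarith) (by have := hy.2; linarith)
    exact ne_of_gt hp
  have hdd : ContDiffAt ℝ ∞ dd ‖y‖ := by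
    have h : ContDiffAt ℝ ∞ (fun s : ℝ => Real.log ((1 + s) / (1 - s))) ‖y‖ :=
      (((contDiffAt_const (c := (1:ℝ))).add contDiffAt_id).div
        ((contDiffAt_const (c := (1:ℝ))).sub contDiffAt_id) h1).log harg
    exact h
  exact hdd.comp y hn

lemma christoffel_contDiffOn (i j k : Fin N) :
    ContDiffOn ℝ ∞ (fun y : EE N => christoffel N y i j k) (SS N) := by
  simp only [christoffel]
  have hi : ∀ i : Fin N, ContDiffOn ℝ ∞ (fun y : EE N => y i) (SS N) := fun i =>
    ((EuclideanSpace.proj (𝕜 := ℝ) i : EE N →L[ℝ] ℝ).contDiff).contDiffOn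
  apply ContDiffOn.mul
  · exact ContDiffOn.div contDiffOn_const
      ((contDiff_const.sub (contDiff_norm_sq ℝ)).contDiffOn)
      (fun y hy => denom_ne y hy.2)
  · exact (((hi i).mul contDiffOn_const).add ((hi j).mul contDiffOn_const)).sub
      ((hi k).mul contDiffOn_const)

lemma fderiv_apply_contDiffOn {f : EE N → ℝ} (hf : ContDiffOn ℝ ∞ f (SS N)) (w : EE N) :
    ContDiffOn ℝ ∞ (fun y => fderiv ℝ f y w) (SS N) :=
  (hf.fderiv_of_isOpen isOpen_SS (by simp)).clm_apply contDiffOn_const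

lemma swap4 {j : ℕ} (f : Fin N → (Fin j → Fin N) → Fin j → Fin N → ℝ) :
    (∑ i0 : Fin N, ∑ J : Fin j → Fin N, ∑ ℓ : Fin j, ∑ α : Fin N, f i0 J ℓ α)
      = ∑ ℓ : Fin j, ∑ J : Fin j → Fin N, ∑ α : Fin N, ∑ i0 : Fin N, f i0 J ℓ α := by
  rw [Finset.sum_comm]
  refine Eq.trans (Finset.sum_congr rfl fun J _ => ?_) Finset.sum_comm
  calc (∑ i0 : Fin N, ∑ ℓ : Fin j, ∑ α : Fin N, f i0 J ℓ α)
      = ∑ ℓ : Fin j, ∑ i0 : Fin N, ∑ α : Fin N, f i0 J ℓ α := Finset.sum_comm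
    _ = ∑ ℓ : Fin j, ∑ α : Fin N, ∑ i0 : Fin N, f i0 J ℓ α :=
        Finset.sum_congr rfl fun ℓ _ => Finset.sum_comm

lemma covD_sum_split {j : ℕ} (η : (Fin j → Fin N) → EE N → ℝ) (x : EE N) :
    (∑ I : Fin (j+1) → Fin N, covD N j η I x * ∏ m, x (I m))
      = (∑ J : Fin j → Fin N,
            (∑ i0 : Fin N, x i0 * fderiv ℝ (η J) x (EuclideanSpace.single i0 1))
              * ∏ m, x (J m))
        - ∑ ℓ : Fin j, ∑ J : Fin j → Fin N, ∑ α : Fin N, ∑ i0 : Fin N,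
            christoffel N x i0 (J ℓ) α * η (Function.update J ℓ α) x
              * (x i0 * ∏ m, x (J m)) := by
  have ptwise : ∀ (i0 : Fin N) (J : Fin j → Fin N),
      covD N j η (Fin.cons i0 J) x * ∏ m : Fin (j+1), x ((Fin.cons i0 J : Fin (j+1) → Fin N) m)
        = fderiv ℝ (η J) x (EuclideanSpace.single i0 1) * (x i0 * ∏ m, x (J m))
          - ∑ ℓ : Fin j, ∑ α : Fin N, christoffel N x i0 (J ℓ) α
              * η (Function.update J ℓ α) x * (x i0 * ∏ m, x (J m)) := by
    intro i0 J
    rw [Fin.prod_univ_succ]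
    simp only [covD, Fin.cons_zero, Fin.cons_succ]
    rw [sub_mul, Finset.sum_mul]
    congr 1
    exact Finset.sum_congr rfl fun ℓ _ => Finset.sum_mul _ _ _
  rw [← Equiv.sum_comp (Fin.consEquiv (fun _ => Fin N)), Fintype.sum_prod_type]
  refine Eq.trans (Finset.sum_congr rfl fun i0 _ =>
    Finset.sum_congr rfl fun J _ => ptwise i0 J) ?_
  simp only [Finset.sum_sub_distrib]
  congr 1
  · rw [Finset.sum_comm]
    refine Finset.sum_congr rfl fun J _ => ?_
    rw [Finset.sum_mul]
    exact Finset.sum_congr rfl fun i0 _ => by ring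
  · exact swap4 _

lemma ray_eq {j : ℕ} (v : ℝ → ℝ) (hv : ContDiff ℝ (⊤ : ℕ∞) v)
    (η : (Fin j → Fin N) → EE N → ℝ)
    (hsm : ∀ J, ContDiffOn ℝ ∞ (η J) (SS N))
    (hev : ∀ y ∈ SS N, (∑ J : Fin j → Fin N, η J y * ∏ m, y (J m)) = gg v j ‖y‖)
    (x : EE N) (hx : x ∈ SS N) :
    (∑ J : Fin j → Fin N, fderiv ℝ (η J) x x * ∏ m, x (J m))
      = ‖x‖ * ggD v j ‖x‖ - j * gg v j ‖x‖ := by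
  have hr0 : 0 < ‖x‖ := norm_pos_iff.2 hx.1
  have hΦ : HasDerivAt (fun t : ℝ => ∑ J : Fin j → Fin N, η J (t • x) * ∏ m, x (J m))
      (∑ J : Fin j → Fin N, fderiv ℝ (η J) x x * ∏ m, x (J m)) 1 := by
    apply HasDerivAt.fun_sum
    intro J _
    have hdJ : DifferentiableAt ℝ (η J) x :=
      ((hsm J).contDiffAt (isOpen_SS.mem_nhds hx)).differentiableAt (by simp)
    have hsmul : HasDerivAt (fun t : ℝ => t • x) x 1 := by
      simpa using (hasDerivAt_id (1:ℝ)).smul_const x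
    have hf' : HasFDerivAt (η J) (fderiv ℝ (η J) x) ((1:ℝ) • x) := by
      rw [one_smul]; exact hdJ.hasFDerivAt
    exact (hf'.comp_hasDerivAt 1 hsmul).mul_const _
  have hmul : HasDerivAt (fun t : ℝ => t * ‖x‖) ‖x‖ 1 := by
    simpa using (hasDerivAt_id (1:ℝ)).mul_const ‖x‖
  have hggr : HasDerivAt (gg v j) (ggD v j ‖x‖) ((1:ℝ) * ‖x‖) := by
    rw [one_mul]; exact gg_hasDeriv v hv j ‖x‖ hr0 hx.2
  have hnum := hggr.comp 1 hmul
  have hpow := hasDerivAt_pow j (1:ℝ)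
  have hdiv := hnum.div hpow (by simp)
  have hΦ2 : HasDerivAt (fun t : ℝ => gg v j (t * ‖x‖) / t ^ j)
      (‖x‖ * ggD v j ‖x‖ - j * gg v j ‖x‖) 1 := by
    refine hdiv.congr_deriv ?_
    simp only [Function.comp, one_pow, one_mul, mul_one]
    ring
  have hmem : Set.Ioo (0:ℝ) (1/‖x‖) ∈ nhds (1:ℝ) :=
    Ioo_mem_nhds one_pos (one_lt_one_div hr0 hx.2)
  have hevq : ∀ t ∈ Set.Ioo (0:ℝ) (1/‖x‖),
      (∑ J : Fin j → Fin N, η J (t • x) * ∏ m, x (J m)) = gg v j (t * ‖x‖) / t ^ j := by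
    intro t ht
    have ht0 : 0 < t := ht.1
    have htr : t * ‖x‖ < 1 := (lt_div_iff₀ hr0).1 ht.2
    have hnorm : ‖t • x‖ = t * ‖x‖ := by
      rw [norm_smul, Real.norm_eq_abs, abs_of_pos ht0]
    have htx : t • x ∈ SS N := ⟨smul_ne_zero (ne_of_gt ht0) hx.1, by rw [hnorm]; exact htr⟩
    have h := hev (t • x) htx
    rw [hnorm] at h
    rw [eq_div_iff (pow_ne_zero j (ne_of_gt ht0)), ← h]
    rw [Finset.sum_mul]
    refine Finset.sum_congr rfl fun J _ => ?_
    have hprod : (∏ m, (t • x) (J m)) = t ^ j * ∏ m, x (J m) := by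
      have : ∀ m : Fin j, (t • x) (J m) = t * x (J m) := fun m => rfl
      simp only [this, Finset.prod_mul_distrib, Finset.prod_const, Finset.card_univ,
        Fintype.card_fin]
    rw [hprod]
    ring
  have hΦ2' : HasDerivAt (fun t : ℝ => ∑ J : Fin j → Fin N, η J (t • x) * ∏ m, x (J m))
      (‖x‖ * ggD v j ‖x‖ - j * gg v j ‖x‖) 1 :=
    hΦ2.congr_of_eventuallyEq (Filter.eventually_of_mem hmem hevq)
  exact hΦ.unique hΦ2'

lemma main (u : EE N → ℝ) (v : ℝ → ℝ) (hv : ContDiff ℝ (⊤ : ℕ∞) v)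
    (hu : ∀ x : EE N, ‖x‖ < 1 → u x = v (dd ‖x‖)) (j : ℕ) :
    (∀ I : Fin j → Fin N, ContDiffOn ℝ ∞ (covIter N u j I) (SS N)) ∧
    (∀ y, y ∈ SS N → (∑ I : Fin j → Fin N, covIter N u j I y * ∏ m, y (I m)) = gg v j ‖y‖) := by
  induction j with
  | zero =>
    constructor
    · intro I
      exact ((hv.of_le (by simp)).comp_contDiffOn contDiffOn_dnorm).congr fun y hy => hu y hy.2
    · intro y hy
      simp only [covIter, gg, pow_zero, one_mul, iteratedDeriv_zero, Finset.univ_unique,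
        Finset.sum_singleton, Finset.univ_eq_empty, Finset.prod_empty, mul_one]
      exact hu y hy.2
  | succ j ih =>
    have hsmS : ∀ I : Fin (j+1) → Fin N, ContDiffOn ℝ ∞ (covIter N u (j+1) I) (SS N) := by
      intro I
      show ContDiffOn ℝ ∞ (fun y =>
        fderiv ℝ (covIter N u j fun m => I m.succ) y (EuclideanSpace.single (I 0) 1)
          - ∑ ℓ : Fin j, ∑ α : Fin N, christoffel N y (I 0) (I ℓ.succ) α
              * covIter N u j (Function.update (fun m => I m.succ) ℓ α) y) (SS N)
      apply ContDiffOn.sub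
      · exact fderiv_apply_contDiffOn (ih.1 _) _
      · apply ContDiffOn.sum; intro ℓ _
        apply ContDiffOn.sum; intro α _
        exact (christoffel_contDiffOn _ _ _).mul (ih.1 _)
    refine ⟨hsmS, ?_⟩
    intro y hy
    have hdiff : ∀ J : Fin j → Fin N, DifferentiableAt ℝ (covIter N u j J) y := fun J =>
      ((ih.1 J).contDiffAt (isOpen_SS.mem_nhds hy)).differentiableAt (by simp)
    have hr0 : 0 < ‖y‖ := norm_pos_iff.2 hy.1
    show (∑ I : Fin (j+1) → Fin N, covD N j (covIter N u j) I y * ∏ m, y (I m)) = _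
    rw [covD_sum_split]
    have hA : (∑ J : Fin j → Fin N,
          (∑ i0 : Fin N, y i0 * fderiv ℝ (covIter N u j J) y (EuclideanSpace.single i0 1))
            * ∏ m, y (J m))
        = ‖y‖ * ggD v j ‖y‖ - j * gg v j ‖y‖ := by
      refine Eq.trans (Finset.sum_congr rfl fun J _ => by
        rw [fderiv_contract _ y (hdiff J)]) (ray_eq v hv (covIter N u j) ih.1 ih.2 y hy)
    have hB : (∑ ℓ : Fin j, ∑ J : Fin j → Fin N, ∑ α : Fin N, ∑ i0 : Fin N,
          christoffel N y i0 (J ℓ) α * covIter N u j (Function.update J ℓ α) y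
            * (y i0 * ∏ m, y (J m)))
        = j * (2 / (1 - ‖y‖ ^ 2) * ‖y‖ ^ 2 * gg v j ‖y‖) := by
      refine Eq.trans (Finset.sum_congr rfl fun ℓ _ => Bcontract y (covIter N u j) ℓ) ?_
      rw [ih.2 y hy, Finset.sum_const, Finset.card_univ, Fintype.card_fin, nsmul_eq_mul]
    rw [hA, hB]
    have := gg_combine v j ‖y‖ hr0 hy.2
    rw [← this]
    ring


theorem stmt18 (N : ℕ) (hN : 2 ≤ N) (u : EuclideanSpace ℝ (Fin N) → ℝ) (v : ℝ → ℝ)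
    (hv : ContDiff ℝ (⊤ : ℕ∞) v)
    (hu : ∀ x : EuclideanSpace ℝ (Fin N), ‖x‖ < 1 →
      u x = v (Real.log ((1 + ‖x‖) / (1 - ‖x‖))))
    (j : ℕ) (hj : 1 ≤ j) (x : EuclideanSpace ℝ (Fin N)) (hx : x ≠ 0) (hx1 : ‖x‖ < 1) :
    iteratedDeriv j v (Real.log ((1 + ‖x‖) / (1 - ‖x‖)))
        = ((1 - ‖x‖ ^ 2) / 2) ^ j *
            ∑ I : Fin j → Fin N, covIter N u j I x * (∏ m : Fin j, x (I m)) / ‖x‖ ^ j ∧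
      |iteratedDeriv j v (Real.log ((1 + ‖x‖) / (1 - ‖x‖)))|
        ≤ Real.sqrt (((1 - ‖x‖ ^ 2) / 2) ^ (2 * j) *
            ∑ I : Fin j → Fin N, covIter N u j I x ^ 2) := by
  have hxS : x ∈ SS N := ⟨hx, hx1⟩
  have hm := (main u v hv (fun z hz => hu z hz) j).2 x hxS
  have hr0 : 0 < ‖x‖ := norm_pos_iff.2 hx
  have h2 : (1:ℝ) - ‖x‖ ^ 2 ≠ 0 := denom_ne x hx1
  have hpos : (0:ℝ) < (1 - ‖x‖ ^ 2) / 2 := by nlinarith [norm_nonneg x]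
  have hlog : Real.log ((1 + ‖x‖) / (1 - ‖x‖)) = dd ‖x‖ := rfl
  -- sum with division inside equals sum divided
  have hsum : (∑ I : Fin j → Fin N, covIter N u j I x * (∏ m : Fin j, x (I m)) / ‖x‖ ^ j)
      = (∑ I : Fin j → Fin N, covIter N u j I x * ∏ m, x (I m)) / ‖x‖ ^ j :=
    (Finset.sum_div _ _ _).symm
  have hc : ((1 - ‖x‖ ^ 2) / 2) * (2 / (1 - ‖x‖ ^ 2)) = 1 := by field_simp
  have part1 : iteratedDeriv j v (Real.log ((1 + ‖x‖) / (1 - ‖x‖)))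
      = ((1 - ‖x‖ ^ 2) / 2) ^ j *
          ∑ I : Fin j → Fin N, covIter N u j I x * (∏ m : Fin j, x (I m)) / ‖x‖ ^ j := by
    rw [hsum, hm, hlog]
    unfold gg
    calc iteratedDeriv j v (dd ‖x‖)
        = (((1 - ‖x‖ ^ 2) / 2) * (2 / (1 - ‖x‖ ^ 2))) ^ j * iteratedDeriv j v (dd ‖x‖)
            * (‖x‖ ^ j / ‖x‖ ^ j) := by
          rw [hc, one_pow, div_self (pow_ne_zero j hr0.ne'), one_mul, mul_one]
      _ = ((1 - ‖x‖ ^ 2) / 2) ^ j *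
            ((‖x‖ * (2 / (1 - ‖x‖ ^ 2))) ^ j * iteratedDeriv j v (dd ‖x‖) / ‖x‖ ^ j) := by
          rw [mul_pow, mul_pow]
          ring
  refine ⟨part1, ?_⟩
  -- Cauchy–Schwarz part
  set S := ∑ I : Fin j → Fin N, covIter N u j I x * ((∏ m : Fin j, x (I m)) / ‖x‖ ^ j) with hS
  have part1' : iteratedDeriv j v (Real.log ((1 + ‖x‖) / (1 - ‖x‖)))
      = ((1 - ‖x‖ ^ 2) / 2) ^ j * S := by
    rw [part1, hS]
    congr 1
    exact Finset.sum_congr rfl fun I _ => by rw [mul_div_assoc]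
  have hsq : (∑ I : Fin j → Fin N, ∏ m : Fin j, x (I m) ^ 2) = ‖x‖ ^ (2 * j) := by
    have h := Finset.prod_univ_sum (fun _ : Fin j => (Finset.univ : Finset (Fin N)))
      (fun _ i => x i ^ 2)
    rw [Fintype.piFinset_univ] at h
    rw [← h, Finset.prod_const, Finset.card_univ, Fintype.card_fin, ← norm_sq_eq, ← pow_mul]
  have hg2 : (∑ I : Fin j → Fin N, ((∏ m : Fin j, x (I m)) / ‖x‖ ^ j) ^ 2) = 1 := by
    have : ∀ I : Fin j → Fin N, ((∏ m : Fin j, x (I m)) / ‖x‖ ^ j) ^ 2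
        = (∏ m : Fin j, x (I m) ^ 2) / ‖x‖ ^ (2 * j) := by
      intro I
      rw [div_pow, Finset.prod_pow, ← pow_mul, mul_comm j 2]
    rw [Finset.sum_congr rfl fun I _ => this I, ← Finset.sum_div, hsq,
      div_self (pow_ne_zero _ hr0.ne')]
  have hcs := Finset.sum_mul_sq_le_sq_mul_sq Finset.univ (fun I : Fin j → Fin N => covIter N u j I x)
    (fun I => (∏ m : Fin j, x (I m)) / ‖x‖ ^ j)
  have hSle : |S| ≤ Real.sqrt (∑ I : Fin j → Fin N, covIter N u j I x ^ 2) := by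
    rw [← Real.sqrt_sq_eq_abs]
    apply Real.sqrt_le_sqrt
    calc S ^ 2 ≤ (∑ I : Fin j → Fin N, covIter N u j I x ^ 2)
          * ∑ I : Fin j → Fin N, ((∏ m : Fin j, x (I m)) / ‖x‖ ^ j) ^ 2 := hcs
      _ = _ := by rw [hg2, mul_one]
  calc |iteratedDeriv j v (Real.log ((1 + ‖x‖) / (1 - ‖x‖)))|
      = ((1 - ‖x‖ ^ 2) / 2) ^ j * |S| := by
        rw [part1', abs_mul, abs_of_nonneg (by positivity)]
    _ ≤ ((1 - ‖x‖ ^ 2) / 2) ^ j * Real.sqrt (∑ I : Fin j → Fin N, covIter N u j I x ^ 2) := by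
        exact mul_le_mul_of_nonneg_left hSle (by positivity)
    _ = Real.sqrt (((1 - ‖x‖ ^ 2) / 2) ^ (2 * j) *
          ∑ I : Fin j → Fin N, covIter N u j I x ^ 2) := by
        rw [Real.sqrt_mul (by positivity), mul_comm 2 j, pow_mul, Real.sqrt_sq (by positivity)]
end
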